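/- arXiv:2505.12314 — 2 statements merged into one kernel-verified Lean document; each statement's English description precedes it below -/
import Mathlib

section
/- Let X and Y be finite-dimensional real inner product spaces, let B ⊆ Y be a nonempty compact convex set with M_B := sup_{u ∈ B} ‖u‖, let h : Y → ℝ be a convex differentiable function with ∇h(y) ∈ B for all y ∈ Y, and let G : X → Y be continuously differentiable with DG Lipschitz continuous of constant L_G ≥ 0. Then the composition g := h ∘ G satisfies g(x) ≥ g(x̄) + ⟨∇g(x̄), x − x̄⟩ − (L_G · M_B / 2)·‖x − x̄‖² for all x, x̄ ∈ X. -/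
open scoped InnerProductSpace

/-!
With `u = ∇h(G x̄)`, convexity of `h` gives `h (G x) ≥ h (G x̄) + ⟪u, G x - G x̄⟫`, and the chain
rule gives `⟪∇g(x̄), x - x̄⟫ = ⟪u, DG(x̄)(x - x̄)⟫`. The difference of the two inner products is
`⟪u, r⟫` for the first-order Taylor remainder `r` of `G`, and a Lipschitz derivative bounds
`‖r‖ ≤ (L_G / 2) ‖x - x̄‖²`, while `‖u‖ ≤ M_B` because `u ∈ B`.
-/

theorem ConvexOn.add_fderiv_sub_le {E : Type*} [NormedAddCommGroup E] [NormedSpace ℝ E]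
    {s : Set E} {f : E → ℝ} {f' : E →L[ℝ] ℝ} {x y : E} (hf : ConvexOn ℝ s f)
    (hx : x ∈ s) (hy : y ∈ s) (hderiv : HasFDerivAt f f' x) :
    f x + f' (y - x) ≤ f y := by
  have hline : HasDerivAt (f ∘ AffineMap.lineMap (k := ℝ) x y) (f' (y - x)) 0 :=
    (AffineMap.lineMap_apply_zero (k := ℝ) x y ▸ hderiv).comp_hasDerivAt 0
      AffineMap.hasDerivAt_lineMap
  have hslope := (hf.comp_affineMap (AffineMap.lineMap x y)).le_slope_of_hasDerivAt
    (x := 0) (y := 1) (by simpa using hx) (by simpa using hy) one_pos hline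
  simp only [slope_def_field, Function.comp_apply, AffineMap.lineMap_apply_one,
    AffineMap.lineMap_apply_zero, sub_zero, div_one] at hslope
  linarith

theorem norm_image_sub_sub_fderiv_le_of_lipschitz {E F : Type*} [NormedAddCommGroup E]
    [NormedSpace ℝ E] [NormedAddCommGroup F] [NormedSpace ℝ F]
    {f : E → F} {f' : E → E →L[ℝ] F} {x : E} {L : ℝ}
    (hf : ∀ z, HasFDerivAt f (f' z) z) (hlip : ∀ z, ‖f' z - f' x‖ ≤ L * ‖z - x‖) (y : E) :
    ‖f y - f x - f' x (y - x)‖ ≤ L / 2 * ‖y - x‖ ^ 2 := by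
  set d := y - x
  let φ : ℝ → F := fun t => f (x + t • d) - f x - t • f' x d
  have hφ : ∀ t, HasDerivAt φ (f' (x + t • d) d - f' x d) t := fun t => by
    have hline : HasDerivAt (fun s : ℝ => x + s • d) d t := by
      simpa using ((hasDerivAt_id t).smul_const d).const_add x
    exact (((hf _).comp_hasDerivAt t hline).sub_const (f x)).sub
      (((hasDerivAt_id t).smul_const (f' x d)).congr_deriv (one_smul ℝ _))
  have hB : ∀ t, HasDerivAt (fun t : ℝ => L / 2 * ‖d‖ ^ 2 * t ^ 2) (L * ‖d‖ ^ 2 * t) t :=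
    fun t => ((hasDerivAt_pow 2 t).const_mul (L / 2 * ‖d‖ ^ 2)).congr_deriv (by ring)
  have hbound : ∀ t ∈ Set.Ico (0 : ℝ) 1, ‖f' (x + t • d) d - f' x d‖ ≤ L * ‖d‖ ^ 2 * t := by
    rintro t ⟨ht, -⟩
    calc ‖f' (x + t • d) d - f' x d‖ = ‖(f' (x + t • d) - f' x) d‖ := rfl
      _ ≤ ‖f' (x + t • d) - f' x‖ * ‖d‖ := ContinuousLinearMap.le_opNorm _ _
      _ ≤ L * ‖t • d‖ * ‖d‖ := by
          gcongr
          simpa using hlip (x + t • d)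
      _ = L * ‖d‖ ^ 2 * t := by rw [norm_smul, Real.norm_of_nonneg ht]; ring
  have := image_norm_le_of_norm_deriv_right_le_deriv_boundary (f := φ) (a := 0) (b := 1)
    (fun t _ => (hφ t).continuousAt.continuousWithinAt) (fun t _ => (hφ t).hasDerivWithinAt)
    (by simp [φ]) hB hbound (Set.right_mem_Icc.mpr zero_le_one)
  simpa [φ, d] using this

theorem HasGradientAt.inner_gradient_comp {X Y : Type*} [NormedAddCommGroup X]
    [InnerProductSpace ℝ X] [CompleteSpace X] [NormedAddCommGroup Y] [InnerProductSpace ℝ Y]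
    [CompleteSpace Y] {h : Y → ℝ} {G : X → Y} {u : Y} {G' : X →L[ℝ] Y} {x : X}
    (hh : HasGradientAt h u (G x)) (hG : HasFDerivAt G G' x) (d : X) :
    ⟪_root_.gradient (h ∘ G) x, d⟫_ℝ = ⟪u, G' d⟫_ℝ := by
  rw [inner_gradient_left, ((hasGradientAt_iff_hasFDerivAt.mp hh).comp x hG).fderiv]
  simp

theorem comp_lower_quadratic_bound_general
    {X Y : Type*} [NormedAddCommGroup X] [InnerProductSpace ℝ X] [FiniteDimensional ℝ X]
    [NormedAddCommGroup Y] [InnerProductSpace ℝ Y] [FiniteDimensional ℝ Y]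
    (B : Set Y) (hBcompact : IsCompact B)
    (MB : ℝ) (hMB : MB = sSup ((fun u : Y => ‖u‖) '' B))
    (h : Y → ℝ) (hconv : ConvexOn ℝ Set.univ h)
    (gh : Y → Y) (hgrad : ∀ y, HasGradientAt h (gh y) y)
    (hghB : ∀ y, gh y ∈ B)
    (G : X → Y) (G' : X → X →L[ℝ] Y)
    (hG' : ∀ x, HasFDerivAt G (G' x) x)
    (LG : ℝ)
    (hlip : ∀ x z : X, ‖G' x - G' z‖ ≤ LG * ‖x - z‖) :
    ∀ x xbar : X,
      h (G x) ≥ h (G xbar) + ⟪gradient (h ∘ G) xbar, x - xbar⟫_ℝ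
        - LG * MB / 2 * ‖x - xbar‖ ^ 2 := by
  intro x xbar
  rw [(hgrad (G xbar)).inner_gradient_comp (hG' xbar)]
  set u := gh (G xbar)
  have hu : ‖u‖ ≤ MB :=
    hMB ▸ le_csSup (hBcompact.image continuous_norm).bddAbove (Set.mem_image_of_mem _ (hghB _))
  have hsupport : h (G xbar) + ⟪u, G x - G xbar⟫_ℝ ≤ h (G x) := by
    simpa using hconv.add_fderiv_sub_le trivial trivial
      (hasGradientAt_iff_hasFDerivAt.mp (hgrad (G xbar)))
  have htaylor := norm_image_sub_sub_fderiv_le_of_lipschitz hG' (fun z => hlip z xbar) x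
  have hremainder : -(LG * MB / 2 * ‖x - xbar‖ ^ 2) ≤ ⟪u, G x - G xbar - G' xbar (x - xbar)⟫_ℝ :=
    calc -(LG * MB / 2 * ‖x - xbar‖ ^ 2) = -(MB * (LG / 2 * ‖x - xbar‖ ^ 2)) := by ring
      _ ≤ -(‖u‖ * ‖G x - G xbar - G' xbar (x - xbar)‖) := by
          gcongr
          exact (norm_nonneg u).trans hu
      _ ≤ _ := neg_le_of_abs_le (abs_real_inner_le_norm _ _)
  linarith [inner_sub_right (𝕜 := ℝ) u (G x - G xbar) (G' xbar (x - xbar))]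

/-- If `h` is convex differentiable with gradient taking values in a nonempty compact
convex set `B` with `M_B = sup_{u ∈ B} ‖u‖`, and `G` is continuously differentiable
with `L_G`-Lipschitz derivative, then `g = h ∘ G` satisfies the lower quadratic bound
`g(x) ≥ g(x̄) + ⟪∇g(x̄), x - x̄⟫ - (L_G M_B / 2) ‖x - x̄‖²`. -/
theorem comp_lower_quadratic_bound
    {X Y : Type*} [NormedAddCommGroup X] [InnerProductSpace ℝ X] [FiniteDimensional ℝ X]
    [NormedAddCommGroup Y] [InnerProductSpace ℝ Y] [FiniteDimensional ℝ Y]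
    (B : Set Y) (hBne : B.Nonempty) (hBcompact : IsCompact B) (hBconv : Convex ℝ B)
    (MB : ℝ) (hMB : MB = sSup ((fun u : Y => ‖u‖) '' B))
    (h : Y → ℝ) (hconv : ConvexOn ℝ Set.univ h)
    (gh : Y → Y) (hgrad : ∀ y, HasGradientAt h (gh y) y)
    (hghB : ∀ y, gh y ∈ B)
    (G : X → Y) (G' : X → X →L[ℝ] Y)
    (hG' : ∀ x, HasFDerivAt G (G' x) x) (hG'cont : Continuous G')
    (LG : ℝ) (hLG : 0 ≤ LG)
    (hlip : ∀ x z : X, ‖G' x - G' z‖ ≤ LG * ‖x - z‖) :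
    ∀ x xbar : X,
      h (G x) ≥ h (G xbar) + ⟪gradient (h ∘ G) xbar, x - xbar⟫_ℝ
        - LG * MB / 2 * ‖x - xbar‖ ^ 2 :=
  comp_lower_quadratic_bound_general B hBcompact MB hMB h hconv gh hgrad hghB G G' hG' LG hlip
end

section
/- Let X be a finite-dimensional real inner product space, let f : X → ℝ be differentiable with ∇f Lipschitz continuous of constant L_f > 0, let P₁, P₂ : X → ℝ be convex, and define ψ := f + P₁ − P₂. Fix x⁰ ∈ X and a subgradient ξ ∈ ∂P₂(x⁰). Let v ∈ X, L̂ > 0, L_g > 0, μ > 0, λ ≥ 0, c ∈ ℝ, define g(x) := c + ⟨v, x − x⁰⟩ + (L_g/(2μ))·‖x − x⁰‖², and suppose x* ∈ X minimizes over X the function L(x) := P₁(x) + ⟨∇f(x⁰) − ξ, x − x⁰⟩ + (L̂/2)·‖x − x⁰‖² + λ·g(x), with λ·g(x*) = 0. Then for all x ∈ X: ψ(x*) ≤ f(x⁰) + P₁(x) − P₂(x⁰) + ⟨∇f(x⁰) − ξ, x − x⁰⟩ + λ·g(x) + (L̂/2)·‖x − x⁰‖² + ((L_f − L̂)/2)·‖x*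 − x⁰‖² − ((μ·L̂ + λ·L_g)/(2μ))·‖x − x*‖². -/
/-!
The model `L(x) = P₁(x) + ⟪∇f(x⁰) - ξ, x - x⁰⟫ + (L̂/2)‖x - x⁰‖² + λ g(x)` is a convex function
plus an affine one plus `(m/2)‖x - x⁰‖²` with `m = L̂ + λ L_g / μ`, hence `m`-strongly convex, so its
minimizer satisfies `L(x*) + (m/2)‖x - x*‖² ≤ L(x)`. Adding the descent lemma
`f(x*) ≤ f(x⁰) + ⟪∇f(x⁰), x* - x⁰⟫ + (L_f/2)‖x* - x⁰‖²`, the subgradient inequality for `P₂`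
at `x*`, and `λ g(x*) = 0` gives the bound.
-/

open scoped InnerProductSpace Topology
open Set Filter

theorem StrongConvexOn.add_sq_norm_sub_le_of_isMinOn {E : Type*} [NormedAddCommGroup E]
    [NormedSpace ℝ E] {s : Set E} {m : ℝ} {f : E → ℝ} (hf : StrongConvexOn s m f) {x₀ x : E}
    (hx₀ : x₀ ∈ s) (hx : x ∈ s) (hmin : IsMinOn f s x₀) :
    f x₀ + m / 2 * ‖x - x₀‖ ^ 2 ≤ f x := by
  have along_segment : ∀ t ∈ Ioc (0 : ℝ) 1, f x₀ + (1 - t) * (m / 2 * ‖x - x₀‖ ^ 2) ≤ f x := by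
    rintro t ⟨ht₀, ht₁⟩
    have hmem := hf.1 hx hx₀ ht₀.le (sub_nonneg.2 ht₁) (add_sub_cancel t 1)
    have hconv := hf.2 hx hx₀ ht₀.le (sub_nonneg.2 ht₁) (add_sub_cancel t 1)
    have hle : f x₀ ≤ f (t • x + (1 - t) • x₀) := hmin hmem
    simp only [smul_eq_mul] at hconv
    have : t * (f x₀ + (1 - t) * (m / 2 * ‖x - x₀‖ ^ 2)) ≤ t * f x := by nlinarith
    exact le_of_mul_le_mul_left this ht₀
  have hlim : Tendsto (fun t : ℝ ↦ f x₀ + (1 - t) * (m / 2 * ‖x - x₀‖ ^ 2)) (𝓝[>] 0)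
      (𝓝 (f x₀ + m / 2 * ‖x - x₀‖ ^ 2)) := by
    have hcont : Continuous fun t : ℝ ↦ f x₀ + (1 - t) * (m / 2 * ‖x - x₀‖ ^ 2) := by fun_prop
    simpa using (hcont.tendsto 0).mono_left nhdsWithin_le_nhds
  exact le_of_tendsto hlim (eventually_of_mem (Ioc_mem_nhdsGT one_pos) along_segment)

section InnerProductSpace

variable {X : Type*} [NormedAddCommGroup X] [InnerProductSpace ℝ X]

theorem ConvexOn.strongConvexOn_add_inner_add_sq_norm_sub {s : Set X} {f : X → ℝ}
    (hf : ConvexOn ℝ s f) (a x₀ : X) (m k : ℝ) :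
    StrongConvexOn s m fun x ↦ f x + ⟪a, x - x₀⟫_ℝ + m / 2 * ‖x - x₀‖ ^ 2 + k := by
  have affine_part : (fun x ↦ f x + ⟪a, x - x₀⟫_ℝ + m / 2 * ‖x - x₀‖ ^ 2 + k - m / 2 * ‖x‖ ^ 2) =
      fun x ↦ f x + innerₛₗ ℝ (a - m • x₀) x + (k - ⟪a, x₀⟫_ℝ + m / 2 * ‖x₀‖ ^ 2) := by
    funext x
    rw [innerₛₗ_apply_apply, norm_sub_sq_real, inner_sub_left, inner_sub_right, real_inner_smul_left,
      real_inner_comm x₀ x]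
    ring
  rw [strongConvexOn_iff_convex, affine_part]
  exact (hf.add ((innerₛₗ ℝ (a - m • x₀)).convexOn hf.1)).add_const _

theorem HasGradientAt.hasDerivAt_comp_add_smul [CompleteSpace X] {f : X → ℝ} {g x d : X} {t : ℝ}
    (h : HasGradientAt f g (x + t • d)) :
    HasDerivAt (fun s : ℝ ↦ f (x + s • d)) ⟪g, d⟫_ℝ t := by
  have hline : HasDerivAt (fun s : ℝ ↦ x + s • d) d t := by
    simpa using ((hasDerivAt_id t).smul_const d).const_add x
  simpa [InnerProductSpace.toDual_apply_apply, Function.comp_def] using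
    h.hasFDerivAt.comp_hasDerivAt t hline

theorem le_add_inner_add_sq_of_lipschitz_gradient [CompleteSpace X] {f : X → ℝ} {f' : X → X}
    (hf : ∀ x, HasGradientAt f (f' x) x) {L : ℝ} {x₀ : X}
    (hLip : ∀ y, ‖f' y - f' x₀‖ ≤ L * ‖y - x₀‖) (y : X) :
    f y ≤ f x₀ + ⟪f' x₀, y - x₀⟫_ℝ + L / 2 * ‖y - x₀‖ ^ 2 := by
  set d := y - x₀
  have hφ (t : ℝ) : HasDerivAt (fun s : ℝ ↦ f (x₀ + s • d)) ⟪f' (x₀ + t • d), d⟫_ℝ t :=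
    (hf _).hasDerivAt_comp_add_smul
  have hB (t : ℝ) : HasDerivAt (fun s : ℝ ↦ f x₀ + s * ⟪f' x₀, d⟫_ℝ + L / 2 * s ^ 2 * ‖d‖ ^ 2)
      (⟪f' x₀, d⟫_ℝ + L * t * ‖d‖ ^ 2) t := by
    refine ((((hasDerivAt_id t).mul_const _).const_add _).add
      (((hasDerivAt_pow 2 t).const_mul (L / 2)).mul_const _)).congr_deriv ?_
    simp only [one_mul, Nat.cast_ofNat]; ring
  have slope_bound (t : ℝ) (ht : 0 ≤ t) : ⟪f' (x₀ + t • d), d⟫_ℝ ≤ ⟪f' x₀, d⟫_ℝ + L * t * ‖d‖ ^ 2 :=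
    calc ⟪f' (x₀ + t • d), d⟫_ℝ = ⟪f' x₀, d⟫_ℝ + ⟪f' (x₀ + t • d) - f' x₀, d⟫_ℝ := by
          rw [inner_sub_left]; ring
      _ ≤ ⟪f' x₀, d⟫_ℝ + L * ‖x₀ + t • d - x₀‖ * ‖d‖ := by
          gcongr
          exact (real_inner_le_norm _ _).trans (mul_le_mul_of_nonneg_right (hLip _) (norm_nonneg _))
      _ = ⟪f' x₀, d⟫_ℝ + L * t * ‖d‖ ^ 2 := by
          rw [add_sub_cancel_left, norm_smul, Real.norm_of_nonneg ht]; ring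
  have := image_le_of_deriv_right_le_deriv_boundary (a := 0) (b := 1)
    (fun t _ ↦ (hφ t).continuousAt.continuousWithinAt) (fun t _ ↦ (hφ t).hasDerivWithinAt)
    (by simp) (fun t _ ↦ (hB t).continuousAt.continuousWithinAt) (fun t _ ↦ (hB t).hasDerivWithinAt)
    (fun t ht ↦ slope_bound t ht.1) (right_mem_Icc.2 zero_le_one)
  simpa [d] using this

end InnerProductSpace

theorem smba_step_objective_bound_general
    {X : Type*} [NormedAddCommGroup X] [InnerProductSpace ℝ X] [FiniteDimensional ℝ X]
    (f : X → ℝ) (f' : X → X) (hf : ∀ x, HasGradientAt f (f' x) x)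
    (Lf : ℝ)
    (hflip : ∀ x z : X, ‖f' x - f' z‖ ≤ Lf * ‖x - z‖)
    (P₁ P₂ : X → ℝ) (hP₁ : ConvexOn ℝ Set.univ P₁)
    (ψ : X → ℝ) (hψ : ∀ x, ψ x = f x + P₁ x - P₂ x)
    (x0 ξ : X) (hξ : ∀ z : X, P₂ x0 + ⟪ξ, z - x0⟫_ℝ ≤ P₂ z)
    (v : X) (Lhat Lg μ lam c : ℝ)
    (hμ : 0 < μ)
    (g : X → ℝ) (hg : ∀ x : X, g x = c + ⟪v, x - x0⟫_ℝ + Lg / (2 * μ) * ‖x - x0‖ ^ 2)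
    (xs : X)
    (hmin : ∀ x : X,
      P₁ xs + ⟪f' x0 - ξ, xs - x0⟫_ℝ + Lhat / 2 * ‖xs - x0‖ ^ 2 + lam * g xs ≤
      P₁ x + ⟪f' x0 - ξ, x - x0⟫_ℝ + Lhat / 2 * ‖x - x0‖ ^ 2 + lam * g x)
    (hcomp : lam * g xs = 0) :
    ∀ x : X, ψ xs ≤ f x0 + P₁ x - P₂ x0 + ⟪f' x0 - ξ, x - x0⟫_ℝ + lam * g x
      + Lhat / 2 * ‖x - x0‖ ^ 2 + (Lf - Lhat) / 2 * ‖xs - x0‖ ^ 2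
      - (μ * Lhat + lam * Lg) / (2 * μ) * ‖x - xs‖ ^ 2 := by
  intro x
  set m := Lhat + lam * Lg / μ
  have hmodel : (fun z ↦ P₁ z + ⟪f' x0 - ξ, z - x0⟫_ℝ + Lhat / 2 * ‖z - x0‖ ^ 2 + lam * g z) =
      fun z ↦ P₁ z + ⟪f' x0 - ξ + lam • v, z - x0⟫_ℝ + m / 2 * ‖z - x0‖ ^ 2 + lam * c := by
    funext z
    rw [hg, inner_add_left, real_inner_smul_left]
    ring
  have hstrong : StrongConvexOn univ m
      fun z ↦ P₁ z + ⟪f' x0 - ξ, z - x0⟫_ℝ + Lhat / 2 * ‖z - x0‖ ^ 2 + lam * g z :=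
    hmodel ▸ hP₁.strongConvexOn_add_inner_add_sq_norm_sub _ _ _ _
  have hgrowth := hstrong.add_sq_norm_sub_le_of_isMinOn (mem_univ xs) (mem_univ x)
    (isMinOn_univ_iff.2 hmin)
  have hdescent := le_add_inner_add_sq_of_lipschitz_gradient hf (fun y ↦ hflip y x0) xs
  have hm : m / 2 = (μ * Lhat + lam * Lg) / (2 * μ) := by simp only [m]; field_simp
  rw [hψ, ← hm]
  linarith [hξ xs, inner_sub_left (𝕜 := ℝ) (f' x0) ξ (xs - x0)]

/-- Key per-step upper bound for the smoothing MBA subproblem: if `x*` minimizes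
`L(x) = P₁(x) + ⟪∇f(x⁰) - ξ, x - x⁰⟫ + (L̂/2)‖x - x⁰‖² + λ g(x)` with `λ g(x*) = 0`,
then `ψ(x*) = f(x*) + P₁(x*) - P₂(x*)` is bounded by the stated model value. -/
theorem smba_step_objective_bound
    {X : Type*} [NormedAddCommGroup X] [InnerProductSpace ℝ X] [FiniteDimensional ℝ X]
    (f : X → ℝ) (f' : X → X) (hf : ∀ x, HasGradientAt f (f' x) x)
    (Lf : ℝ) (hLf : 0 < Lf)
    (hflip : ∀ x z : X, ‖f' x - f' z‖ ≤ Lf * ‖x - z‖)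
    (P₁ P₂ : X → ℝ) (hP₁ : ConvexOn ℝ Set.univ P₁) (hP₂ : ConvexOn ℝ Set.univ P₂)
    (ψ : X → ℝ) (hψ : ∀ x, ψ x = f x + P₁ x - P₂ x)
    (x0 ξ : X) (hξ : ∀ z : X, P₂ x0 + ⟪ξ, z - x0⟫_ℝ ≤ P₂ z)
    (v : X) (Lhat Lg μ lam c : ℝ)
    (hLhat : 0 < Lhat) (hLg : 0 < Lg) (hμ : 0 < μ) (hlam : 0 ≤ lam)
    (g : X → ℝ) (hg : ∀ x : X, g x = c + ⟪v, x - x0⟫_ℝ + Lg / (2 * μ) * ‖x - x0‖ ^ 2)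
    (xs : X)
    (hmin : ∀ x : X,
      P₁ xs + ⟪f' x0 - ξ, xs - x0⟫_ℝ + Lhat / 2 * ‖xs - x0‖ ^ 2 + lam * g xs ≤
      P₁ x + ⟪f' x0 - ξ, x - x0⟫_ℝ + Lhat / 2 * ‖x - x0‖ ^ 2 + lam * g x)
    (hcomp : lam * g xs = 0) :
    ∀ x : X, ψ xs ≤ f x0 + P₁ x - P₂ x0 + ⟪f' x0 - ξ, x - x0⟫_ℝ + lam * g x
      + Lhat / 2 * ‖x - x0‖ ^ 2 + (Lf - Lhat) / 2 * ‖xs - x0‖ ^ 2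
      - (μ * Lhat + lam * Lg) / (2 * μ) * ‖x - xs‖ ^ 2 :=
  smba_step_objective_bound_general f f' hf Lf hflip P₁ P₂ hP₁ ψ hψ x0 ξ hξ v Lhat Lg μ lam c hμ g
    hg xs hmin hcomp
end
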